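/- Let E ∈ ℝ with E ≠ 0, and let ρ : ℝ → ℂ be continuous and integrable (ρ ∈ L¹(ℝ;ℂ)). Define Rρ(t) := (1/(2iE)) ∫_ℝ e^{iE|t−t'|} ρ(t') dt'. Then Rρ is continuously differentiable on ℝ, with (Rρ)'(t) = (1/2)∫_ℝ sgn(t−t') e^{iE|t−t'|} ρ(t') dt', and Rρ is outgoing: lim_{t→+∞} ((Rρ)'(t) − iE·Rρ(t)) = 0 and lim_{t→−∞} ((Rρ)'(t) + iE·Rρ(t)) = 0. -/

import Mathlib

open MeasureTheory Topology Filter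

noncomputable section

/-- The outgoing resolvent `Rρ(t) = (1/(2iE)) ∫ e^{iE|t−t'|}ρ(t')dt'`. -/
def Rsc (E : ℝ) (ρ : ℝ → ℂ) (t : ℝ) : ℂ :=
  (2 * Complex.I * (E : ℂ))⁻¹
    * ∫ t' : ℝ, Complex.exp (Complex.I * (E : ℂ) * (|t - t'| : ℝ)) * ρ t'

/-- The derivative of the outgoing resolvent,
`(Rρ)'(t) = (1/2) ∫ sgn(t−t') e^{iE|t−t'|}ρ(t')dt'`. -/
def RscD (E : ℝ) (ρ : ℝ → ℂ) (t : ℝ) : ℂ :=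
  (1 / 2 : ℂ)
    * ∫ t' : ℝ, (Real.sign (t - t') : ℝ)
        * Complex.exp (Complex.I * (E : ℂ) * (|t - t'| : ℝ)) * ρ t'

/-!
Splitting the integral at `t' = t` factorises the kernel:
`Rρ(t) = (2iE)⁻¹ (e^{iEt} L(t) + e^{-iEt} U(t))` with
`L(t) = ∫_{t' ≤ t} e^{-iEt'} ρ(t') dt'` and `U(t) = ∫_{t' > t} e^{iEt'} ρ(t') dt'`.
When this is differentiated, the two boundary terms `±ρ(t)/(2iE)` cancel, leaving
`(Rρ)' = ½ (e^{iEt} L − e^{-iEt} U)`. Hence `(Rρ)' − iE Rρ = −e^{-iEt} U(t)` and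
`(Rρ)' + iE Rρ = e^{iEt} L(t)`; these are unimodular multiples of tails of integrals of
`L¹` functions, so they vanish at `+∞` and `−∞` respectively.
-/

open Set Complex

section HalfLineIntegral

variable {F : Type*} [NormedAddCommGroup F] [NormedSpace ℝ F] [CompleteSpace F] {φ : ℝ → F}

theorem hasDerivAt_setIntegral_Iic (hφ : Integrable φ) {t : ℝ} (ht : ContinuousAt φ t) :
    HasDerivAt (fun u => ∫ s in Iic u, φ s) (φ t) t := by
  have hsplit : (fun u => ∫ s in Iic u, φ s) =
      fun u => (∫ s in Iic 0, φ s) + ∫ s in 0..u, φ s := by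
    funext u
    rw [← intervalIntegral.integral_Iic_sub_Iic hφ.integrableOn hφ.integrableOn, add_sub_cancel]
  rw [hsplit]
  exact (intervalIntegral.integral_hasDerivAt_right hφ.intervalIntegrable
    hφ.aestronglyMeasurable.stronglyMeasurableAtFilter ht).const_add _

theorem hasDerivAt_setIntegral_Ioi (hφ : Integrable φ) {t : ℝ} (ht : ContinuousAt φ t) :
    HasDerivAt (fun u => ∫ s in Ioi u, φ s) (-φ t) t := by
  have hsplit : (fun u => ∫ s in Ioi u, φ s) =
      fun u => (∫ s, φ s) - ∫ s in Iic u, φ s := by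
    funext u
    rw [← intervalIntegral.integral_Iic_add_Ioi hφ.integrableOn hφ.integrableOn,
      add_sub_cancel_left]
  rw [hsplit]
  exact (hasDerivAt_setIntegral_Iic hφ ht).const_sub _

end HalfLineIntegral

theorem norm_exp_I_mul_ofReal_mul_ofReal (a b : ℝ) : ‖exp (I * a * b)‖ = 1 := by
  rw [show I * a * b = ((a * b : ℝ) : ℂ) * I by push_cast; ring]
  exact norm_exp_ofReal_mul_I _

theorem norm_exp_neg_I_mul_ofReal_mul_ofReal (a b : ℝ) : ‖exp (-(I * a * b))‖ = 1 := by
  rw [exp_neg, norm_inv, norm_exp_I_mul_ofReal_mul_ofReal, inv_one]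

theorem hasDerivAt_exp_mul_ofReal (c : ℂ) (t : ℝ) :
    HasDerivAt (fun s : ℝ => exp (c * s)) (c * exp (c * t)) t := by
  simpa [mul_comm] using ((hasDerivAt_id t).ofReal_comp.const_mul c).cexp

theorem inv_two_I_mul_mul_I_mul {z : ℂ} (hz : z ≠ 0) : (2 * I * z)⁻¹ * (I * z) = 1 / 2 := by
  field_simp [I_ne_zero, hz]

namespace Rsc

variable {E : ℝ} {ρ : ℝ → ℂ}

variable (E ρ) in
def lower (t : ℝ) : ℂ := ∫ s in Iic t, exp (-(I * E * s)) * ρ s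

variable (E ρ) in
def upper (t : ℝ) : ℂ := ∫ s in Ioi t, exp (I * E * s) * ρ s

theorem integrable_exp_neg_mul (hρ : Integrable ρ) :
    Integrable fun s : ℝ => exp (-(I * E * s)) * ρ s :=
  hρ.bdd_mul (by fun_prop) (ae_of_all _ fun s => (norm_exp_neg_I_mul_ofReal_mul_ofReal E s).le)

theorem integrable_exp_mul (hρ : Integrable ρ) :
    Integrable fun s : ℝ => exp (I * E * s) * ρ s :=
  hρ.bdd_mul (by fun_prop) (ae_of_all _ fun s => (norm_exp_I_mul_ofReal_mul_ofReal E s).le)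

theorem integrable_kernel (hρ : Integrable ρ) (t : ℝ) :
    Integrable fun s : ℝ => exp (I * E * (|t - s| : ℝ)) * ρ s :=
  hρ.bdd_mul (by fun_prop) (ae_of_all _ fun s => (norm_exp_I_mul_ofReal_mul_ofReal E _).le)

theorem setIntegral_Iic_kernel (t : ℝ) :
    ∫ s in Iic t, exp (I * E * (|t - s| : ℝ)) * ρ s = exp (I * E * t) * lower E ρ t := by
  rw [lower, ← integral_const_mul]
  refine setIntegral_congr_fun measurableSet_Iic fun s (hs : s ≤ t) => ?_
  rw [abs_of_nonneg (sub_nonneg.2 hs), ← mul_assoc, ← exp_add]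
  push_cast
  ring_nf

theorem setIntegral_Ioi_kernel (t : ℝ) :
    ∫ s in Ioi t, exp (I * E * (|t - s| : ℝ)) * ρ s = exp (-(I * E * t)) * upper E ρ t := by
  rw [upper, ← integral_const_mul]
  refine setIntegral_congr_fun measurableSet_Ioi fun s (hs : t < s) => ?_
  rw [abs_of_neg (sub_neg.2 hs), ← mul_assoc, ← exp_add]
  push_cast
  ring_nf

theorem eq_lower_upper (hρ : Integrable ρ) (t : ℝ) :
    Rsc E ρ t =
      (2 * I * E)⁻¹ * (exp (I * E * t) * lower E ρ t + exp (-(I * E * t)) * upper E ρ t) := by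
  rw [Rsc, ← intervalIntegral.integral_Iic_add_Ioi (integrable_kernel hρ t).integrableOn
    (integrable_kernel hρ t).integrableOn, setIntegral_Iic_kernel, setIntegral_Ioi_kernel]

theorem RscD_eq_lower_upper (hρ : Integrable ρ) (t : ℝ) :
    RscD E ρ t = 1 / 2 * (exp (I * E * t) * lower E ρ t - exp (-(I * E * t)) * upper E ρ t) := by
  have hk := integrable_kernel (E := E) hρ t
  have h_lt : EqOn (fun s : ℝ => (Real.sign (t - s) : ℂ) * exp (I * E * (|t - s| : ℝ)) * ρ s)
      (fun s => exp (I * E * (|t - s| : ℝ)) * ρ s) (Iio t) := fun s (hs : s < t) => by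
    simp [Real.sign_of_pos (sub_pos.2 hs)]
  have h_gt : EqOn (fun s : ℝ => (Real.sign (t - s) : ℂ) * exp (I * E * (|t - s| : ℝ)) * ρ s)
      (fun s => -(exp (I * E * (|t - s| : ℝ)) * ρ s)) (Ioi t) := fun s (hs : t < s) => by
    simp [Real.sign_of_neg (sub_neg.2 hs)]
  -- `Real.sign (t - s)` vanishes at `s = t`, so the left half-line is handled through `Iio t`.
  rw [RscD, ← intervalIntegral.integral_Iic_add_Ioi
      ((integrableOn_Iic_iff_integrableOn_Iio enorm_ne_top).2
        (hk.integrableOn.congr_fun h_lt.symm measurableSet_Iio))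
      (hk.integrableOn.neg.congr_fun h_gt.symm measurableSet_Ioi),
    integral_Iic_eq_integral_Iio, setIntegral_congr_fun measurableSet_Iio h_lt,
    ← integral_Iic_eq_integral_Iio, setIntegral_congr_fun measurableSet_Ioi h_gt, integral_neg,
    setIntegral_Iic_kernel, setIntegral_Ioi_kernel]
  ring

theorem RscD_sub_I_mul_Rsc (hE : E ≠ 0) (hρ : Integrable ρ) (t : ℝ) :
    RscD E ρ t - I * E * Rsc E ρ t = -(exp (-(I * E * t)) * upper E ρ t) := by
  rw [RscD_eq_lower_upper hρ, eq_lower_upper hρ]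
  linear_combination -(exp (I * E * t) * lower E ρ t + exp (-(I * E * t)) * upper E ρ t)
    * inv_two_I_mul_mul_I_mul (ofReal_ne_zero.2 hE)

theorem RscD_add_I_mul_Rsc (hE : E ≠ 0) (hρ : Integrable ρ) (t : ℝ) :
    RscD E ρ t + I * E * Rsc E ρ t = exp (I * E * t) * lower E ρ t := by
  rw [RscD_eq_lower_upper hρ, eq_lower_upper hρ]
  linear_combination (exp (I * E * t) * lower E ρ t + exp (-(I * E * t)) * upper E ρ t)
    * inv_two_I_mul_mul_I_mul (ofReal_ne_zero.2 hE)

theorem tendsto_lower_atBot : Tendsto (lower E ρ) atBot (𝓝 0) :=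
  tendsto_integral_Iic_zero tendsto_id

theorem tendsto_upper_atTop : Tendsto (upper E ρ) atTop (𝓝 0) :=
  tendsto_integral_Ioi_zero tendsto_id

theorem tendsto_RscD_sub_I_mul_atTop (hE : E ≠ 0) (hρ : Integrable ρ) :
    Tendsto (fun t : ℝ => RscD E ρ t - I * E * Rsc E ρ t) atTop (𝓝 0) := by
  have h_upper : Tendsto (fun t => ‖upper E ρ t‖) atTop (𝓝 0) := by
    simpa using tendsto_upper_atTop.norm
  refine squeeze_zero_norm (fun t => le_of_eq ?_) h_upper
  rw [RscD_sub_I_mul_Rsc hE hρ, norm_neg, norm_mul, norm_exp_neg_I_mul_ofReal_mul_ofReal, one_mul]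

theorem tendsto_RscD_add_I_mul_atBot (hE : E ≠ 0) (hρ : Integrable ρ) :
    Tendsto (fun t : ℝ => RscD E ρ t + I * E * Rsc E ρ t) atBot (𝓝 0) := by
  have h_lower : Tendsto (fun t => ‖lower E ρ t‖) atBot (𝓝 0) := by
    simpa using tendsto_lower_atBot.norm
  refine squeeze_zero_norm (fun t => le_of_eq ?_) h_lower
  rw [RscD_add_I_mul_Rsc hE hρ, norm_mul, norm_exp_I_mul_ofReal_mul_ofReal, one_mul]

variable (hρc : Continuous ρ) (hρ : Integrable ρ)
include hρc hρ

theorem hasDerivAt_lower (t : ℝ) : HasDerivAt (lower E ρ) (exp (-(I * E * t)) * ρ t) t :=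
  hasDerivAt_setIntegral_Iic (integrable_exp_neg_mul hρ) (by fun_prop)

theorem hasDerivAt_upper (t : ℝ) : HasDerivAt (upper E ρ) (-(exp (I * E * t) * ρ t)) t :=
  hasDerivAt_setIntegral_Ioi (integrable_exp_mul hρ) (by fun_prop)

theorem hasDerivAt (hE : E ≠ 0) (t : ℝ) : HasDerivAt (Rsc E ρ) (RscD E ρ t) t := by
  have h := (((hasDerivAt_exp_mul_ofReal (I * E) t).mul (hasDerivAt_lower (E := E) hρc hρ t)).add
    ((hasDerivAt_exp_mul_ofReal (-(I * E)) t).mul (hasDerivAt_upper (E := E) hρc hρ t))).const_mul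
    (2 * I * E)⁻¹
  rw [funext (eq_lower_upper hρ), RscD_eq_lower_upper hρ]
  simp only [neg_mul] at h
  refine h.congr_deriv ?_
  linear_combination (exp (I * E * t) * lower E ρ t - exp (-(I * E * t)) * upper E ρ t)
    * inv_two_I_mul_mul_I_mul (ofReal_ne_zero.2 hE)

theorem continuous_RscD : Continuous (RscD E ρ) := by
  have hlower : Continuous (lower E ρ) :=
    continuous_iff_continuousAt.2 fun t => (hasDerivAt_lower hρc hρ t).continuousAt
  have hupper : Continuous (upper E ρ) :=
    continuous_iff_continuousAt.2 fun t => (hasDerivAt_upper hρc hρ t).continuousAt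
  rw [funext (RscD_eq_lower_upper hρ)]
  fun_prop

end Rsc

/-- **Lemma (`Rρ` is `C¹` and outgoing).** For real `E ≠ 0` and `ρ ∈ L¹`
continuous, `Rρ` is continuously differentiable with derivative
`(Rρ)'(t) = (1/2)∫ sgn(t−t')e^{iE|t−t'|}ρ(t')dt'`, and it satisfies the
outgoing radiation conditions `(Rρ)' − iE Rρ → 0` at `+∞` and
`(Rρ)' + iE Rρ → 0` at `−∞`. -/
theorem R_outgoing
    (E : ℝ) (hE : E ≠ 0) (ρ : ℝ → ℂ)
    (hρc : Continuous ρ) (hρint : Integrable ρ) :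
    (∀ t : ℝ, HasDerivAt (Rsc E ρ) (RscD E ρ t) t) ∧
    Continuous (RscD E ρ) ∧
    Tendsto (fun t : ℝ => RscD E ρ t - Complex.I * (E : ℂ) * Rsc E ρ t)
      atTop (𝓝 0) ∧
    Tendsto (fun t : ℝ => RscD E ρ t + Complex.I * (E : ℂ) * Rsc E ρ t)
      atBot (𝓝 0) :=
  ⟨Rsc.hasDerivAt hρc hρint hE, Rsc.continuous_RscD hρc hρint,
    Rsc.tendsto_RscD_sub_I_mul_atTop hE hρint, Rsc.tendsto_RscD_add_I_mul_atBot hE hρint⟩
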